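/- Let C ⊆ F_2^n be a nonempty code, let 0 ≤ p ≤ 1/2, and suppose f(x) = Σ_k f_k·K_k(x) satisfies f_k ≥ 0 for 1 ≤ k ≤ n and f(i) ≤ p^i(1−p)^{n−i} for all 0 ≤ i ≤ n. Then the probability of undetected error satisfies P_ue(C,p) = Σ_{i=1}^n A_i p^i (1−p)^{n−i} ≥ |C|·f_0 − f(0). -/

import Mathlib

/-!
With `f i = ∑ k, f_k K_k(i)` and `A'_k = ∑ i, A_i K_k(i)`, swapping sums gives
`∑ i, A_i f(i) = ∑ k, f_k A'_k`. Expanding `K_k(d(x, y))` over the characters `χ_T`, `|T| = k`, of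
`F_2^n` gives `|C| A'_k = ∑_T (∑_{x ∈ C} χ_T(x))² ≥ 0` (Delsarte), and `A'_0 = |C|`, `A_0 = 1`. Hence
`∑_{i ≥ 1} A_i p^i (1-p)^{n-i} ≥ ∑_{i ≥ 1} A_i f(i) = ∑ k, f_k A'_k - f(0) ≥ |C| f_0 - f(0)`.
-/

open Finset

noncomputable def distDistr (n : ℕ) (C : Finset (Fin n → ZMod 2)) (i : ℕ) : ℝ :=
  (((C ×ˢ C).filter (fun p => hammingDist p.1 p.2 = i)).card : ℝ) / (C.card : ℝ)

noncomputable def kraw (n k i : ℕ) : ℝ :=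
  ∑ j ∈ Finset.range (k + 1), (-1 : ℝ) ^ j * (i.choose j : ℝ) * ((n - i).choose (k - j) : ℝ)

theorem card_powersetCard_filter_card_inter {α : Type*} [DecidableEq α] {U D : Finset α}
    (hD : D ⊆ U) {j k : ℕ} (hjk : j ≤ k) :
    #{T ∈ U.powersetCard k | #(T ∩ D) = j} = (#D).choose j * (#(U \ D)).choose (k - j) := by
  rw [← card_powersetCard j D, ← card_powersetCard (k - j) (U \ D), ← card_product]
  refine card_nbij' (fun T => (T ∩ D, T \ D)) (fun q => q.1 ∪ q.2) ?_ ?_ ?_ ?_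
  · intro T hT
    simp only [coe_filter, mem_powersetCard, Set.mem_ofPred_eq, coe_product, Set.mem_prod,
      mem_coe] at hT ⊢
    refine ⟨⟨inter_subset_right, hT.2⟩, sdiff_subset_sdiff hT.1.1 subset_rfl, ?_⟩
    rw [← hT.1.2, ← hT.2, ← card_inter_add_card_sdiff T D, Nat.add_sub_cancel_left]
  · rintro ⟨A, B⟩ hAB
    simp only [coe_filter, mem_powersetCard, Set.mem_ofPred_eq, coe_product, Set.mem_prod,
      mem_coe, subset_sdiff] at hAB ⊢
    obtain ⟨⟨hAD, hA⟩, ⟨hBU, hBD⟩, hB⟩ := hAB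
    have hAB : Disjoint A B := disjoint_of_subset_left hAD hBD.symm
    refine ⟨⟨union_subset (hAD.trans hD) hBU, by rw [card_union_of_disjoint hAB]; omega⟩, ?_⟩
    rw [union_inter_distrib_right, inter_eq_left.mpr hAD, disjoint_iff_inter_eq_empty.mp hBD,
      union_empty, hA]
  · intro T _
    exact sup_inf_sdiff T D
  · rintro ⟨A, B⟩ hAB
    simp only [coe_product, Set.mem_prod, mem_coe, mem_powersetCard, subset_sdiff] at hAB
    obtain ⟨⟨hAD, -⟩, ⟨-, hBD⟩, -⟩ := hAB
    simp only [Prod.mk.injEq]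
    constructor
    · rw [union_inter_distrib_right, inter_eq_left.mpr hAD, disjoint_iff_inter_eq_empty.mp hBD,
        union_empty]
    · rw [union_sdiff_distrib, sdiff_eq_empty_iff_subset.mpr hAD, hBD.sdiff_eq_left,
        empty_union]

theorem sum_powersetCard_neg_one_pow_card_inter {α : Type*} [Fintype α] [DecidableEq α]
    (D : Finset α) (k : ℕ) :
    ∑ T ∈ univ.powersetCard k, (-1 : ℝ) ^ #(T ∩ D) = kraw (Fintype.card α) k #D := by
  have hmaps : ∀ T ∈ univ.powersetCard k, #(T ∩ D) ∈ range (k + 1) := fun T hT =>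
    mem_range_succ_iff.mpr ((card_le_card inter_subset_left).trans (mem_powersetCard.mp hT).2.le)
  rw [← sum_fiberwise_of_maps_to hmaps, kraw]
  refine sum_congr rfl fun j hj => ?_
  rw [sum_congr rfl fun T hT => by rw [(mem_filter.mp hT).2], sum_const, nsmul_eq_mul,
    card_powersetCard_filter_card_inter (subset_univ D) (mem_range_succ_iff.mp hj),
    card_univ_sdiff]
  push_cast
  ring

theorem sum_range_succ_eq_add_sum_Icc {M : Type*} [AddCommMonoid M] (f : ℕ → M) (n : ℕ) :
    ∑ i ∈ range (n + 1), f i = f 0 + ∑ i ∈ Icc 1 n, f i := by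
  rw [sum_range_eq_add_Ico f (Nat.succ_pos n), Nat.succ_eq_add_one, Ico_add_one_right_eq_Icc]

-- The character `x ↦ (-1) ^ ∑_{j ∈ T} x j` of `(ZMod 2)^ι`.
noncomputable def walshChar {ι : Type*} (T : Finset ι) (x : ι → ZMod 2) : ℝ :=
  ∏ j ∈ T, (-1 : ℝ) ^ (x j).val

theorem neg_one_pow_val_mul_neg_one_pow_val (a b : ZMod 2) :
    (-1 : ℝ) ^ a.val * (-1 : ℝ) ^ b.val = if a = b then 1 else -1 := by
  obtain rfl | rfl : a = 0 ∨ a = 1 := by revert a; decide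
  all_goals obtain rfl | rfl : b = 0 ∨ b = 1 := by revert b; decide
  all_goals simp [ZMod.val_one]

theorem walshChar_mul_walshChar {ι : Type*} [Fintype ι] [DecidableEq ι] (T : Finset ι)
    (x y : ι → ZMod 2) :
    walshChar T x * walshChar T y = (-1 : ℝ) ^ #(T ∩ ({j | x j ≠ y j} : Finset ι)) := by
  rw [walshChar, walshChar, ← prod_mul_distrib]
  simp only [neg_one_pow_val_mul_neg_one_pow_val, prod_ite, prod_const_one, one_mul, prod_const]
  congr 2
  ext j
  simp

theorem kraw_hammingDist_eq_sum_walshChar {ι : Type*} [Fintype ι] [DecidableEq ι] (k : ℕ)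
    (x y : ι → ZMod 2) :
    kraw (Fintype.card ι) k (hammingDist x y)
      = ∑ T ∈ univ.powersetCard k, walshChar T x * walshChar T y := by
  simp only [walshChar_mul_walshChar, sum_powersetCard_neg_one_pow_card_inter, hammingDist]

theorem sum_kraw_hammingDist_nonneg {ι : Type*} [Fintype ι] [DecidableEq ι] (k : ℕ)
    (C : Finset (ι → ZMod 2)) :
    0 ≤ ∑ q ∈ C ×ˢ C, kraw (Fintype.card ι) k (hammingDist q.1 q.2) := by
  have hsq : ∑ q ∈ C ×ˢ C, kraw (Fintype.card ι) k (hammingDist q.1 q.2)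
      = ∑ T ∈ univ.powersetCard k, (∑ x ∈ C, walshChar T x) ^ 2 := by
    simp only [kraw_hammingDist_eq_sum_walshChar]
    rw [sum_comm]
    exact sum_congr rfl fun T _ => by rw [sq, sum_mul_sum, sum_product]
  rw [hsq]
  exact sum_nonneg fun T _ => sq_nonneg _

theorem kraw_zero_left (n i : ℕ) : kraw n 0 i = 1 := by
  simp [kraw]

theorem sum_distDistr_mul (n : ℕ) (C : Finset (Fin n → ZMod 2)) (g : ℕ → ℝ) :
    ∑ i ∈ range (n + 1), distDistr n C i * g i
      = (∑ q ∈ C ×ˢ C, g (hammingDist q.1 q.2)) / #C := by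
  have hmaps : ∀ q ∈ C ×ˢ C, hammingDist q.1 q.2 ∈ range (n + 1) := fun q _ =>
    mem_range_succ_iff.mpr ((hammingDist_le_card_fintype).trans_eq (Fintype.card_fin n))
  rw [← sum_fiberwise_of_maps_to hmaps, sum_div]
  refine sum_congr rfl fun i _ => ?_
  rw [sum_congr rfl fun q hq => by rw [(mem_filter.mp hq).2], sum_const, nsmul_eq_mul,
    distDistr, div_mul_eq_mul_div]

theorem sum_distDistr_mul_kraw_nonneg (n k : ℕ) (C : Finset (Fin n → ZMod 2)) :
    0 ≤ ∑ i ∈ range (n + 1), distDistr n C i * kraw n k i := by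
  rw [sum_distDistr_mul]
  have := sum_kraw_hammingDist_nonneg k C
  rw [Fintype.card_fin] at this
  positivity

theorem sum_distDistr_mul_kraw_zero {n : ℕ} {C : Finset (Fin n → ZMod 2)} (hC : C.Nonempty) :
    ∑ i ∈ range (n + 1), distDistr n C i * kraw n 0 i = #C := by
  have hC' : (#C : ℝ) ≠ 0 := Nat.cast_ne_zero.mpr hC.card_ne_zero
  rw [sum_distDistr_mul]
  simp only [kraw_zero_left, sum_const, card_product, nsmul_eq_mul, mul_one, Nat.cast_mul]
  field_simp

theorem distDistr_zero {n : ℕ} {C : Finset (Fin n → ZMod 2)} (hC : C.Nonempty) :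
    distDistr n C 0 = 1 := by
  have hdiag : #{q ∈ C ×ˢ C | hammingDist q.1 q.2 = 0} = #C := by
    simp only [hammingDist_eq_zero, ← diag_eq_filter, diag_card]
  rw [distDistr, hdiag, div_self (Nat.cast_ne_zero.mpr hC.card_ne_zero)]

theorem stmt8_general (n : ℕ) (C : Finset (Fin n → ZMod 2)) (hC : C.Nonempty)
    (p : ℝ)
    (fc : ℕ → ℝ)
    (hfc : ∀ k, 1 ≤ k → k ≤ n → 0 ≤ fc k)
    (hfg : ∀ i, i ≤ n →
      (∑ k ∈ Finset.range (n + 1), fc k * kraw n k i) ≤ p ^ i * (1 - p) ^ (n - i)) :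
    ∑ i ∈ Finset.Icc 1 n, distDistr n C i * p ^ i * (1 - p) ^ (n - i)
      ≥ (C.card : ℝ) * fc 0 - (∑ k ∈ Finset.range (n + 1), fc k * kraw n k 0) := by
  set f : ℕ → ℝ := fun i => ∑ k ∈ range (n + 1), fc k * kraw n k i
  set S : ℕ → ℝ := fun k => ∑ i ∈ range (n + 1), distDistr n C i * kraw n k i
  have hprimal : ∑ i ∈ Icc 1 n, distDistr n C i * f i
      ≤ ∑ i ∈ Icc 1 n, distDistr n C i * p ^ i * (1 - p) ^ (n - i) :=
    sum_le_sum fun i hi => by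
      rw [mul_assoc]
      exact mul_le_mul_of_nonneg_left (hfg i (mem_Icc.mp hi).2) (by unfold distDistr; positivity)
  have hswap : ∑ i ∈ range (n + 1), distDistr n C i * f i = ∑ k ∈ range (n + 1), fc k * S k := by
    simp only [f, S, mul_sum]
    rw [sum_comm]
    exact sum_congr rfl fun k _ => sum_congr rfl fun i _ => by ring
  have hdual : #C * fc 0 ≤ ∑ k ∈ range (n + 1), fc k * S k := by
    rw [sum_range_succ_eq_add_sum_Icc, show S 0 = #C from sum_distDistr_mul_kraw_zero hC,
      mul_comm]
    have := sum_nonneg fun k (hk : k ∈ Icc 1 n) =>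
      mul_nonneg (hfc k (mem_Icc.mp hk).1 (mem_Icc.mp hk).2) (sum_distDistr_mul_kraw_nonneg n k C)
    linarith
  rw [sum_range_succ_eq_add_sum_Icc, distDistr_zero hC, one_mul] at hswap
  linarith

/-- Lower bound on the probability of undetected error:
`P_ue(C,p) = Σ_{i=1}^n A_i p^i (1−p)^{n−i} ≥ |C| f_0 − f(0)`. -/
theorem stmt8 (n : ℕ) (C : Finset (Fin n → ZMod 2)) (hC : C.Nonempty)
    (p : ℝ) (hp0 : 0 ≤ p) (hp : p ≤ 1 / 2)
    (fc : ℕ → ℝ)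
    (hfc : ∀ k, 1 ≤ k → k ≤ n → 0 ≤ fc k)
    (hfg : ∀ i, i ≤ n →
      (∑ k ∈ Finset.range (n + 1), fc k * kraw n k i) ≤ p ^ i * (1 - p) ^ (n - i)) :
    ∑ i ∈ Finset.Icc 1 n, distDistr n C i * p ^ i * (1 - p) ^ (n - i)
      ≥ (C.card : ℝ) * fc 0 - (∑ k ∈ Finset.range (n + 1), fc k * kraw n k 0) :=
  stmt8_general n C hC p fc hfc hfg
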